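/- arXiv:math/0501112 — 3 statements merged into one kernel-verified Lean document; each statement's English description precedes it below -/
import Mathlib

section
/- Let π be a set partition of a finite set contributing to the Leonov–Shiryaev formula, i.e., a partition π of {1,...,N} where {1,...,N} is divided into n consecutive intervals ρ_1,...,ρ_n, and suppose π ∨ {ρ_1,...,ρ_n} is the partition with a single block. Then Σ_i (|π_i| - 1) ≥ n - 1, where π_1,...,π_m are the blocks of π. -/
/-!
Form the bipartite graph whose vertices are the blocks of `π` and of `ρ`, a block of `π` being
adjacent to a block of `ρ` when they meet. Its connected components induce a partition coarser
than both `π` and `ρ`, so `π ∨ ρ = ⊤` makes it connected. Every edge is witnessed by an element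
of `{0, …, N-1}`, so it has at most `N` edges, and a connected graph has at least one edge fewer
than vertices: `#π + #ρ ≤ N + 1`. As `ρ` has `n` blocks and `∑ (|π_i| - 1) = N - #π`, the bound
follows.
-/

open Finset

namespace Finpartition

variable {α : Type*} [DecidableEq α]

theorem sum_card_sub_one_add_card_parts {s : Finset α} (P : Finpartition s) :
    ∑ B ∈ P.parts, (#B - 1) + #P.parts = #s := by
  rw [← P.sum_card_parts, card_eq_sum_ones, ← sum_add_distrib]
  exact sum_congr rfl fun B hB => Nat.sub_add_cancel (P.nonempty_of_mem_parts hB).card_pos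

variable [Fintype α]

theorem mem_part_top (x y : α) : y ∈ (⊤ : Finpartition (univ : Finset α)).part x := by
  have := parts_top_subset _ ((⊤ : Finpartition (univ : Finset α)).part_mem.2 (mem_univ x))
  rw [mem_singleton.1 this]
  exact mem_univ y

theorem le_ofSetoid {π : Finpartition (univ : Finset α)} {r : Setoid α} [DecidableRel r]
    (h : ∀ P ∈ π.parts, ∀ x ∈ P, ∀ y ∈ P, r x y) : π ≤ ofSetoid r := by
  intro P hP
  obtain ⟨x, hx⟩ := π.nonempty_of_mem_parts hP
  exact ⟨_, (ofSetoid r).part_mem.2 (mem_univ x),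
    fun y hy => mem_part_ofSetoid_iff_rel.2 (h P hP x hx y hy)⟩

variable (π ρ : Finpartition (univ : Finset α))

def partOf (x : α) : π.parts := ⟨π.part x, π.part_mem.2 (mem_univ x)⟩

theorem partOf_eq_of_mem {P : π.parts} {x : α} (hx : x ∈ (P : Finset α)) : π.partOf x = P :=
  Subtype.ext (π.part_eq_of_mem P.2 hx)

def intersectionGraph : SimpleGraph (π.parts ⊕ ρ.parts) where
  Adj
    | .inl P, .inr R => ((P : Finset α) ∩ R).Nonempty
    | .inr R, .inl P => ((P : Finset α) ∩ R).Nonempty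
    | _, _ => False
  symm := ⟨by rintro (P | R) (P' | R') h <;> exact h⟩
  loopless := ⟨by rintro (P | R) h <;> exact h⟩

theorem intersectionGraph_adj_partOf (x : α) :
    (intersectionGraph π ρ).Adj (.inl (π.partOf x)) (.inr (ρ.partOf x)) :=
  ⟨x, mem_inter.2 ⟨π.mem_part (mem_univ x), ρ.mem_part (mem_univ x)⟩⟩

theorem card_edgeSet_intersectionGraph_le :
    Nat.card (intersectionGraph π ρ).edgeSet ≤ Fintype.card α := by
  rw [← Nat.card_eq_fintype_card]
  refine Nat.card_le_card_of_surjective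
    (fun x => ⟨s(.inl (π.partOf x), .inr (ρ.partOf x)), intersectionGraph_adj_partOf π ρ x⟩) ?_
  rintro ⟨e, he⟩
  induction e using Sym2.ind with | _ v w => ?_
  rcases v with P | R <;> rcases w with P' | R' <;> obtain ⟨x, hx⟩ := he <;> rw [mem_inter] at hx
  all_goals
    exact ⟨x, by simp [partOf_eq_of_mem π hx.1, partOf_eq_of_mem ρ hx.2, Sym2.eq_swap]⟩

theorem intersectionGraph_connected [Nonempty α]
    (hjoin : ∀ σ : Finpartition (univ : Finset α), π ≤ σ → ρ ≤ σ → σ = ⊤) :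
    (intersectionGraph π ρ).Connected := by
  classical
  set G := intersectionGraph π ρ
  let σ := ofSetoid (Setoid.ker fun x => G.connectedComponentMk (.inl (π.partOf x)))
  have mem_σ (x y : α) : y ∈ σ.part x ↔ G.Reachable (.inl (π.partOf x)) (.inl (π.partOf y)) := by
    rw [mem_part_ofSetoid_iff_rel]
    exact SimpleGraph.ConnectedComponent.eq
  have reach_inr (x : α) : G.Reachable (.inl (π.partOf x)) (.inr (ρ.partOf x)) :=
    (intersectionGraph_adj_partOf π ρ x).reachable
  have hπσ : π ≤ σ := le_ofSetoid fun P hP x hx y hy => by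
    rw [Setoid.ker_def, partOf_eq_of_mem π (P := ⟨P, hP⟩) hx,
      partOf_eq_of_mem π (P := ⟨P, hP⟩) hy]
  have hρσ : ρ ≤ σ := le_ofSetoid fun R hR x hx y hy => by
    refine SimpleGraph.ConnectedComponent.eq.2 ((reach_inr x).trans ?_)
    rw [partOf_eq_of_mem ρ (P := ⟨R, hR⟩) hx, ← partOf_eq_of_mem ρ (P := ⟨R, hR⟩) hy]
    exact (reach_inr y).symm
  obtain ⟨x₀⟩ := ‹Nonempty α›
  have reach_inl (y : α) : G.Reachable (.inl (π.partOf x₀)) (.inl (π.partOf y)) := by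
    rw [← mem_σ, hjoin σ hπσ hρσ]
    exact mem_part_top x₀ y
  have reach_all : ∀ v, G.Reachable (.inl (π.partOf x₀)) v := by
    rintro (P | R)
    · obtain ⟨y, hy⟩ := π.nonempty_of_mem_parts P.2
      rw [← partOf_eq_of_mem π hy]
      exact reach_inl y
    · obtain ⟨y, hy⟩ := ρ.nonempty_of_mem_parts R.2
      rw [← partOf_eq_of_mem ρ hy]
      exact (reach_inl y).trans (reach_inr y)
  have : Nonempty (π.parts ⊕ ρ.parts) := ⟨.inl (π.partOf x₀)⟩
  exact ⟨fun v w => (reach_all v).symm.trans (reach_all w)⟩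

theorem card_parts_add_card_parts_le
    (hjoin : ∀ σ : Finpartition (univ : Finset α), π ≤ σ → ρ ≤ σ → σ = ⊤) :
    #π.parts + #ρ.parts ≤ Fintype.card α + 1 := by
  cases isEmpty_or_nonempty α
  · have hπ := π.card_parts_le_card
    have hρ := ρ.card_parts_le_card
    simp only [univ_eq_empty, card_empty, nonpos_iff_eq_zero] at hπ hρ
    omega
  · have hconn := (intersectionGraph_connected π ρ hjoin).card_vert_le_card_edgeSet_add_one
    rw [Nat.card_sum, Nat.card_eq_finsetCard, Nat.card_eq_finsetCard] at hconn
    linarith [card_edgeSet_intersectionGraph_le π ρ]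

end Finpartition

theorem card_image_consecutive_intervals {N n : ℕ} (c : Fin (n + 1) → ℕ) (hc : StrictMono c)
    (hcN : c (Fin.last n) = N) :
    #(univ.image fun s : Fin n =>
      ({j : Fin N | c s.castSucc ≤ j ∧ j < c s.succ} : Finset _)) = n := by
  rw [card_image_of_injective _ ?_, card_univ, Fintype.card_fin]
  intro s t hst
  have hs : c s.castSucc < N := hcN ▸ hc (Fin.castSucc_lt_last s)
  beta_reduce at hst
  have hmem := (Finset.ext_iff.1 hst (⟨c s.castSucc, hs⟩ : Fin N)).1
  simp only [mem_filter, mem_univ, true_and, hc.le_iff_le, hc.lt_iff_lt,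
    Fin.castSucc_le_castSucc_iff, Fin.castSucc_lt_succ_iff, le_refl] at hmem
  exact le_antisymm (hmem trivial).2 (hmem trivial).1

theorem leonov_shiryaev_partition_bound_general {N n : ℕ}
    (c : Fin (n + 1) → ℕ) (hc : StrictMono c) (hcN : c (Fin.last n) = N)
    (ρ : Finpartition (Finset.univ : Finset (Fin N)))
    (hρ : ρ.parts = Finset.image
      (fun s : Fin n => Finset.univ.filter
        (fun j : Fin N => c s.castSucc ≤ (j : ℕ) ∧ (j : ℕ) < c s.succ)) Finset.univ)
    (π : Finpartition (Finset.univ : Finset (Fin N)))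
    (hjoin : ∀ σ : Finpartition (Finset.univ : Finset (Fin N)), π ≤ σ → ρ ≤ σ → σ = ⊤) :
    n - 1 ≤ ∑ B ∈ π.parts, (B.card - 1) := by
  have hρcard : #ρ.parts = n := hρ ▸ card_image_consecutive_intervals c hc hcN
  have hrank := π.card_parts_add_card_parts_le ρ hjoin
  have hsum := π.sum_card_sub_one_add_card_parts
  rw [card_univ, Fintype.card_fin] at hsum
  rw [Fintype.card_fin] at hrank
  omega

/-- let `{0,…,N-1}` be divided into `n` consecutive intervals
`ρ_s = {j : c s ≤ j < c (s+1)}` (the blocks of the partition `ρ`), and let `π` be a set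
partition of `{0,…,N-1}` contributing to the Leonov–Shiryaev formula, i.e. the join
`π ∨ ρ` is the partition with a single block (equivalently: every common upper bound
of `π` and `ρ` is `⊤`). Then `∑_i (|π_i| - 1) ≥ n - 1`. -/
theorem leonov_shiryaev_partition_bound {N n : ℕ}
    (c : Fin (n + 1) → ℕ) (hc : StrictMono c) (hc0 : c 0 = 0) (hcN : c (Fin.last n) = N)
    (ρ : Finpartition (Finset.univ : Finset (Fin N)))
    (hρ : ρ.parts = Finset.image
      (fun s : Fin n => Finset.univ.filter
        (fun j : Fin N => c s.castSucc ≤ (j : ℕ) ∧ (j : ℕ) < c s.succ)) Finset.univ)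
    (π : Finpartition (Finset.univ : Finset (Fin N)))
    (hjoin : ∀ σ : Finpartition (Finset.univ : Finset (Fin N)), π ≤ σ → ρ ≤ σ → σ = ⊤) :
    n - 1 ≤ ∑ B ∈ π.parts, (B.card - 1) :=
  leonov_shiryaev_partition_bound_general c hc hcN ρ hρ π hjoin
end

section
/- Brillinger's formula: let E : A → C factor as E = E^• ∘ E^id through a commutative intermediate algebra, where E^id : A → A^• and E^• : A^• → C are unital linear maps with E^• ∘ E^id = E. Then for commuting elements x_1,...,x_n in A, the cumulants satisfy k(x_1,...,x_n) = Σ_π k^•[ k^id(x_i : i ∈ π_j) : j = 1,2,... ], summing over all set partitions π = {π_1, π_2, ...} of {1,...,n}, where k, k^•, k^id are the cumulants associated with E, E^•, E^id respectively (each defined by the moment-cumulant relation over set partitions). -/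
/-!
Write `μ(k) = (-1)^(k-1) (k-1)!`, so that `k_φ(s) = ∑_π μ(|π|) ∏_{b ∈ π} φ(x_b)`. A partition
`γ` of `s` together with a partition of each part of `γ` amounts to their common refinement `θ`
together with a partition `σ` of the set of parts of `θ`. Since `∑_σ ∏_{c ∈ σ} μ(|c|)` vanishes
unless `θ` has at most one part, reindexing along this bijection gives the moment–cumulant
formula `∑_π ∏_{b ∈ π} k_φ(b) = φ(x_s)` for nonempty `s`. Reindexing the right-hand side of
Brillinger's formula along the same bijection turns it into
`∑_γ μ(|γ|) ∏_{C ∈ γ} E^•(∑_v ∏_{b ∈ v} k^id(b))`, with `v` running over the partitions of `C`;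
by additivity of `E^•` and the moment–cumulant formula for `E^id`, each factor is `E(x_C)`.
-/

open Finset

/-- The cumulants `k_φ(x_i : i ∈ s)` associated with a linear expectation
`φ : A → B`, given by the Möbius-inversion formula over set partitions, equivalently
defined by the moment–cumulant relation `φ(∏_{i∈s} x_i) = ∑_π ∏_{B ∈ π} k_φ(x_i : i ∈ B)`. -/
noncomputable def algCumulantOn {ι A B : Type*} [DecidableEq ι] [CommRing A] [CommRing B]
    (φ : A → B) (s : Finset ι) (x : ι → A) : B :=
  ∑ π : Finpartition s,
    (((-1 : ℤ) ^ (π.parts.card - 1) * (π.parts.card - 1).factorial : ℤ) : B) *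
      ∏ blk ∈ π.parts, φ (∏ i ∈ blk, x i)

theorem Finset.sum_filter_mem_powerset {α M : Type*} [DecidableEq α] [AddCommMonoid M]
    {s : Finset α} {a : α} (ha : a ∈ s) (f : Finset α → M) :
    ∑ B ∈ s.powerset with a ∈ B, f B = ∑ C ∈ (s.erase a).powerset, f (s \ C) := by
  refine sum_nbij' (s \ ·) (s \ ·) ?_ ?_ ?_ ?_ ?_
  · intro B hB
    simp only [mem_filter, mem_powerset] at hB ⊢
    grind
  · intro C hC
    simp only [mem_filter, mem_powerset] at hC ⊢
    grind
  · exact fun B hB => sdiff_sdiff_eq_self (mem_powerset.1 (mem_filter.1 hB).1)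
  · exact fun C hC => sdiff_sdiff_eq_self ((mem_powerset.1 hC).trans (erase_subset a s))
  · intro B hB
    rw [sdiff_sdiff_eq_self (mem_powerset.1 (mem_filter.1 hB).1)]

/-- The Möbius function `μ(π, 1̂)` of the partition lattice, for `π` with `k` blocks. -/
def mobiusCoeff (k : ℕ) : ℤ := (-1) ^ (k - 1) * (k - 1).factorial

theorem mobiusCoeff_succ_succ (k : ℕ) :
    mobiusCoeff (k + 1 + 1) = -(k + 1 : ℤ) * mobiusCoeff (k + 1) := by
  change (-1) ^ (k + 1) * ((k + 1).factorial : ℤ) = -(k + 1 : ℤ) * ((-1) ^ k * k.factorial)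
  rw [Nat.factorial_succ]
  push_cast
  ring

theorem sum_range_choose_smul_mobiusCoeff (k : ℕ) :
    ∑ m ∈ range (k + 1), k.choose m • (if m ≤ 1 then mobiusCoeff (k + 1 - m) else 0) =
      if k = 0 then 1 else 0 := by
  cases k with
  | zero => simp [mobiusCoeff]
  | succ k =>
    rw [sum_range_succ', sum_range_succ']
    simp [mobiusCoeff_succ_succ, ← add_mul]

namespace Finpartition

variable {ι : Type*} [DecidableEq ι] {s B : Finset ι}

theorem heq_of_parts_eq {t : Finset ι} (h : s = t) {P : Finpartition s} {Q : Finpartition t}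
    (hPQ : P.parts = Q.parts) : HEq P Q := by
  subst h
  exact heq_of_eq (Finpartition.ext hPQ)

theorem sup_parts_erase (P : Finpartition s) (hB : B ∈ P.parts) :
    (P.parts.erase B).sup id = s \ B := by
  ext i
  simp only [mem_sup, mem_erase, id, mem_sdiff]
  constructor
  · rintro ⟨b, ⟨hbB, hb⟩, hib⟩
    exact ⟨P.le hb hib, fun hiB => hbB (P.eq_of_mem_parts hb hB hib hiB)⟩
  · rintro ⟨his, hiB⟩
    obtain ⟨b, hb, hib⟩ := P.exists_mem his
    exact ⟨b, ⟨fun h => hiB (h ▸ hib), hb⟩, hib⟩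

def erasePart (P : Finpartition s) (hB : B ∈ P.parts) : Finpartition (s \ B) :=
  P.ofSubset (erase_subset _ _) (P.sup_parts_erase hB)

@[simp]
theorem erasePart_parts (P : Finpartition s) (hB : B ∈ P.parts) :
    (P.erasePart hB).parts = P.parts.erase B := rfl

def equivSigmaPart {a : ι} (ha : a ∈ s) :
    Finpartition s ≃ Σ B : (s.powerset.filter (a ∈ ·)), Finpartition (s \ B.1) where
  toFun P := ⟨⟨P.part a, mem_filter.2 ⟨mem_powerset.2 (P.part_subset a), P.mem_part_self.2 ha⟩⟩,
    P.erasePart (P.part_mem.2 ha)⟩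
  invFun Q := Q.2.extend (nonempty_iff_ne_empty.1 ⟨a, (mem_filter.1 Q.1.2).2⟩)
    sdiff_disjoint (sdiff_sup_cancel (mem_powerset.1 (mem_filter.1 Q.1.2).1))
  left_inv P := Finpartition.ext (insert_erase (P.part_mem.2 ha))
  right_inv := by
    rintro ⟨⟨B, hB⟩, Q⟩
    obtain ⟨hBs, haB⟩ := mem_filter.1 hB
    have hBQ : B ∉ Q.parts := fun h => (mem_sdiff.1 (Q.le h haB)).2 haB
    have hpart : (Q.extend (b := B) (nonempty_iff_ne_empty.1 ⟨a, haB⟩)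
        sdiff_disjoint (sdiff_sup_cancel (mem_powerset.1 hBs))).part a = B :=
      part_eq_of_mem _ (mem_insert_self _ _) haB
    refine Sigma.ext (Subtype.ext hpart) (heq_of_parts_eq (congrArg (s \ ·) hpart) ?_)
    simp only [erasePart_parts, extend_parts, hpart]
    exact erase_insert hBQ

theorem sum_prod_eq_sum_part {R : Type*} [CommSemiring R] {a : ι} (ha : a ∈ s)
    (f : Finset ι → R) :
    ∑ P : Finpartition s, ∏ b ∈ P.parts, f b =
      ∑ B ∈ s.powerset with a ∈ B, f B * ∑ Q : Finpartition (s \ B), ∏ b ∈ Q.parts, f b := by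
  rw [Fintype.sum_equiv (equivSigmaPart ha) _
      (fun Q => f Q.1.1 * ∏ b ∈ Q.2.parts, f b)
      (fun P => (mul_prod_erase _ _ (P.part_mem.2 ha)).symm),
    Fintype.sum_sigma]
  simp_rw [← mul_sum]
  exact sum_coe_sort _ (fun B => f B * ∑ Q : Finpartition (s \ B), ∏ b ∈ Q.parts, f b)

/- Splitting off the part containing `a`, the induction hypothesis leaves only the parts whose
complement has at most one element. -/
theorem sum_prod_mobiusCoeff_card (s : Finset ι) :
    ∑ P : Finpartition s, ∏ b ∈ P.parts, mobiusCoeff #b = if #s ≤ 1 then 1 else 0 := by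
  induction s using Finset.strongInduction with
  | _ s ih =>
  rcases s.eq_empty_or_nonempty with rfl | ⟨a, ha⟩
  · have : Unique (Finpartition (∅ : Finset ι)) := inferInstanceAs (Unique (Finpartition ⊥))
    simp [parts_eq_empty_iff.2 rfl]
  have hterm : ∀ C ∈ (s.erase a).powerset,
      mobiusCoeff #(s \ C) * ∑ Q : Finpartition (s \ (s \ C)), ∏ b ∈ Q.parts, mobiusCoeff #b =
        if #C ≤ 1 then mobiusCoeff (#s - #C) else 0 := by
    intro C hC
    have hCs : C ⊆ s := (mem_powerset.1 hC).trans (erase_subset a s)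
    have haC : a ∉ C := fun h => (mem_erase.1 (mem_powerset.1 hC h)).1 rfl
    rw [ih _ (sdiff_ssubset sdiff_subset ⟨a, mem_sdiff.2 ⟨ha, haC⟩⟩),
      Finset.sdiff_sdiff_eq_self hCs, card_sdiff_of_subset hCs, mul_ite, mul_one, mul_zero]
  obtain ⟨k, hk⟩ : ∃ k, #s = k + 1 := ⟨#s - 1, by have := card_pos.2 ⟨a, ha⟩; omega⟩
  rw [sum_prod_eq_sum_part ha, sum_filter_mem_powerset ha, sum_congr rfl hterm,
    sum_powerset_apply_card (fun m => if m ≤ 1 then mobiusCoeff (#s - m) else 0),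
    card_erase_of_mem ha, hk, Nat.add_sub_cancel, sum_range_choose_smul_mobiusCoeff]
  simp

theorem card_parts_le_one_iff (hs : s.Nonempty) (P : Finpartition s) :
    #P.parts ≤ 1 ↔ P = indiscrete hs.ne_empty := by
  constructor
  · intro h
    obtain ⟨b, hb⟩ := card_eq_one.1 (h.antisymm (card_pos.2 (P.parts_nonempty hs.ne_empty)))
    have hbs : b = s := by simpa [hb] using P.sup_parts
    exact Finpartition.ext (by rw [hb, hbs, indiscrete_parts])
  · rintro rfl
    simp

theorem sum_ite_card_parts_le_one {M : Type*} [AddCommMonoid M] (hs : s.Nonempty)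
    (f : Finpartition s → M) :
    ∑ P : Finpartition s, (if #P.parts ≤ 1 then f P else 0) = f (indiscrete hs.ne_empty) := by
  rw [Fintype.sum_eq_single (indiscrete hs.ne_empty) fun P hP => by
    rw [if_neg (mt (card_parts_le_one_iff hs P).1 hP)]]
  exact if_pos ((card_parts_le_one_iff hs _).2 rfl)

section Coarsen

variable {θ : Finpartition s} (σ : Finpartition θ.parts) {c : Finset (Finset ι)}

theorem filter_subset_sup_eq (hc : c ∈ σ.parts) : θ.parts.filter (· ⊆ c.sup id) = c := by
  ext b
  simp only [mem_filter]
  constructor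
  · rintro ⟨hb, hbc⟩
    obtain ⟨i, hi⟩ := θ.nonempty_of_mem_parts hb
    obtain ⟨b', hb', hib'⟩ := mem_sup.1 (hbc hi)
    rwa [θ.eq_of_mem_parts hb (σ.le hc hb') hi hib']
  · intro hb
    exact ⟨σ.le hc hb, le_sup (f := id) hb⟩

def coarsen : Finpartition s where
  parts := σ.parts.image (·.sup id)
  supIndep := by
    rw [supIndep_iff_pairwiseDisjoint]
    rintro _ hx _ hy hxy
    obtain ⟨c, hc, rfl⟩ := mem_image.1 (mem_coe.1 hx)
    obtain ⟨c', hc', rfl⟩ := mem_image.1 (mem_coe.1 hy)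
    have hcc' : Disjoint c c' := σ.disjoint hc hc' fun h => hxy (by rw [h])
    simp only [Function.onFun, id, Finset.disjoint_sup_left, Finset.disjoint_sup_right]
    intro b' hb' b hb
    exact θ.disjoint (σ.le hc hb) (σ.le hc' hb') fun h => disjoint_left.1 hcc' hb (h ▸ hb')
  sup_parts := by
    rw [sup_image, Function.id_comp]
    calc σ.parts.sup (·.sup id) = (σ.parts.biUnion id).sup id := (sup_biUnion _ _).symm
      _ = s := by rw [σ.biUnion_parts, θ.sup_parts]
  bot_notMem h := by
    obtain ⟨c, hc, hcs⟩ := mem_image.1 h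
    obtain ⟨b, hb⟩ := σ.nonempty_of_mem_parts hc
    exact θ.ne_bot (σ.le hc hb) (le_bot_iff.1 (hcs ▸ le_sup (f := id) hb))

theorem mem_coarsen_parts {B : Finset ι} :
    B ∈ (coarsen σ).parts ↔ ∃ c ∈ σ.parts, c.sup id = B :=
  mem_image

def coarsenRestrict (B : (coarsen σ).parts) : Finpartition (B : Finset ι) :=
  θ.ofSubset (filter_subset (· ⊆ (B : Finset ι)) θ.parts) (by
    obtain ⟨c, hc, hB⟩ := mem_coarsen_parts σ |>.1 B.2
    rw [← hB, filter_subset_sup_eq σ hc])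

@[simp]
theorem coarsenRestrict_parts (B : (coarsen σ).parts) :
    (coarsenRestrict σ B).parts = θ.parts.filter (· ⊆ (B : Finset ι)) := rfl

end Coarsen

section BindPi

variable {γ : Finpartition s} (u : ∀ B : γ.parts, Finpartition (B : Finset ι))

abbrev bindPi : Finpartition s := γ.bind fun B hB => u ⟨B, hB⟩

variable {u}

theorem mem_bindPi_parts {b : Finset ι} : b ∈ (bindPi u).parts ↔ ∃ B, b ∈ (u B).parts := by
  rw [mem_bind]
  exact ⟨fun ⟨B, hB, h⟩ => ⟨⟨B, hB⟩, h⟩, fun ⟨⟨B, hB⟩, h⟩ => ⟨B, hB, h⟩⟩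

theorem index_eq_of_mem_parts {B B' : γ.parts} {b : Finset ι} (hb : b ∈ (u B).parts)
    (hb' : b ∈ (u B').parts) : B = B' := by
  obtain ⟨i, hi⟩ := (u B).nonempty_of_mem_parts hb
  exact Subtype.ext (γ.eq_of_mem_parts B.2 B'.2 ((u B).le hb hi) ((u B').le hb' hi))

theorem injective_parts_apply : Function.Injective fun B => (u B).parts := by
  intro B B' h
  apply Subtype.ext
  rw [← (u B).sup_parts, ← (u B').sup_parts]
  exact congrArg (·.sup id) h

variable (u)

def bindGrouping : Finpartition (bindPi u).parts where
  parts := univ.image fun B => (u B).parts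
  supIndep := by
    rw [supIndep_iff_pairwiseDisjoint]
    rintro _ hx _ hy hxy
    obtain ⟨B, -, rfl⟩ := mem_image.1 (mem_coe.1 hx)
    obtain ⟨B', -, rfl⟩ := mem_image.1 (mem_coe.1 hy)
    exact disjoint_left.2 fun b hb hb' => hxy (by rw [index_eq_of_mem_parts hb hb'])
  sup_parts := by
    ext b
    simp [sup_image, mem_sup]
  bot_notMem h := by
    obtain ⟨B, -, hB⟩ := mem_image.1 h
    exact γ.bot_notMem (parts_eq_empty_iff.1 hB ▸ B.2)

theorem bindGrouping_parts : (bindGrouping u).parts = univ.image fun B => (u B).parts := rfl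

theorem card_bindGrouping_parts : #(bindGrouping u).parts = #γ.parts := by
  rw [bindGrouping_parts, card_image_of_injective _ injective_parts_apply, card_univ,
    Fintype.card_coe]

theorem prod_bindGrouping_parts {M : Type*} [CommMonoid M] (g : Finset (Finset ι) → M) :
    ∏ c ∈ (bindGrouping u).parts, g c = ∏ B, g (u B).parts :=
  prod_image fun _ _ _ _ h => injective_parts_apply h

theorem prod_bindPi_parts {M : Type*} [CommMonoid M] (f : Finset ι → M) :
    ∏ b ∈ (bindPi u).parts, f b = ∏ B, ∏ b ∈ (u B).parts, f b := by
  rw [bind_parts, prod_biUnion fun B _ B' _ h =>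
    disjoint_left.2 fun _ hb hb' => h (index_eq_of_mem_parts hb hb')]
  rfl

theorem filter_subset_bindPi_parts (B : γ.parts) :
    (bindPi u).parts.filter (· ⊆ (B : Finset ι)) = (u B).parts := by
  ext b
  rw [mem_filter, mem_bindPi_parts]
  constructor
  · rintro ⟨⟨B', hb⟩, hbB⟩
    obtain ⟨i, hi⟩ := (u B').nonempty_of_mem_parts hb
    obtain rfl : B' = B := Subtype.ext (γ.eq_of_mem_parts B'.2 B.2 ((u B').le hb hi) (hbB hi))
    exact hb
  · exact fun hb => ⟨⟨B, hb⟩, (u B).le hb⟩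

theorem coarsen_bindGrouping : coarsen (bindGrouping u) = γ := by
  ext1
  simp_rw [coarsen, bindGrouping_parts, image_image, Function.comp_def, sup_parts,
    univ_eq_attach, attach_image_val]

end BindPi

section

variable {θ : Finpartition s} (σ : Finpartition θ.parts)

theorem bindPi_coarsenRestrict : bindPi (coarsenRestrict σ) = θ := by
  ext b
  rw [mem_bindPi_parts]
  constructor
  · rintro ⟨B, hb⟩
    exact (mem_filter.1 hb).1
  · intro hb
    obtain ⟨c, hc, hbc⟩ := mem_sup.1 (show b ∈ σ.parts.sup id by rwa [σ.sup_parts])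
    refine ⟨⟨c.sup id, (mem_coarsen_parts σ).2 ⟨c, hc, rfl⟩⟩, ?_⟩
    exact mem_filter.2 ⟨hb, le_sup (f := id) hbc⟩

theorem bindGrouping_coarsenRestrict_parts :
    (bindGrouping (coarsenRestrict σ)).parts = σ.parts := by
  ext c
  simp only [bindGrouping_parts, coarsenRestrict_parts, mem_image, mem_univ, true_and,
    Subtype.exists, mem_coarsen_parts]
  constructor
  · rintro ⟨_, ⟨c', hc', rfl⟩, rfl⟩
    rwa [filter_subset_sup_eq σ hc']
  · exact fun hc => ⟨c.sup id, ⟨c, hc, rfl⟩, filter_subset_sup_eq σ hc⟩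

end

def sigmaBindEquiv (s : Finset ι) :
    (Σ γ : Finpartition s, ∀ B : γ.parts, Finpartition (B : Finset ι)) ≃
      Σ θ : Finpartition s, Finpartition θ.parts where
  toFun p := ⟨bindPi p.2, bindGrouping p.2⟩
  invFun p := ⟨coarsen p.2, coarsenRestrict p.2⟩
  left_inv := by
    rintro ⟨γ, u⟩
    have hγ := coarsen_bindGrouping u
    refine Sigma.ext hγ (Function.hfunext (congrArg (fun P : Finpartition s => ↥P.parts) hγ)
      fun B B' hBB' => ?_)
    have hB : (B : Finset ι) = B' :=
      (Subtype.heq_iff_coe_eq fun b => Iff.of_eq (congrArg (b ∈ ·.parts) hγ)).1 hBB'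
    refine heq_of_parts_eq hB ?_
    rw [coarsenRestrict_parts, hB]
    exact filter_subset_bindPi_parts u B'
  right_inv := by
    rintro ⟨θ, σ⟩
    have hθ := bindPi_coarsenRestrict σ
    exact Sigma.ext hθ
      (heq_of_parts_eq (congrArg parts hθ) (bindGrouping_coarsenRestrict_parts σ))

theorem sum_sigmaBindEquiv {M : Type*} [AddCommMonoid M]
    (f : ∀ θ : Finpartition s, Finpartition θ.parts → M) :
    ∑ γ : Finpartition s, ∑ u : (∀ B : γ.parts, Finpartition (B : Finset ι)),
        f (bindPi u) (bindGrouping u) = ∑ θ : Finpartition s, ∑ σ, f θ σ := by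
  calc _ = ∑ p : Σ γ : Finpartition s, ∀ B : γ.parts, Finpartition (B : Finset ι),
          f (bindPi p.2) (bindGrouping p.2) := (Fintype.sum_sigma _).symm
    _ = ∑ p : Σ θ : Finpartition s, Finpartition θ.parts, f p.1 p.2 :=
          Fintype.sum_equiv (sigmaBindEquiv s) _ _ fun _ => rfl
    _ = _ := Fintype.sum_sigma _

end Finpartition

open Finpartition

section Cumulants

variable {ι A A' B : Type*} [DecidableEq ι] [CommRing A] [CommRing A'] [CommRing B]

theorem algCumulantOn_eq_sum_mobiusCoeff (φ : A → B) (s : Finset ι) (x : ι → A) :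
    algCumulantOn φ s x =
      ∑ π : Finpartition s, (mobiusCoeff #π.parts : B) * ∏ b ∈ π.parts, φ (∏ i ∈ b, x i) :=
  rfl

theorem sum_prod_algCumulantOn (φ : A → B) (x : ι → A) {s : Finset ι} (hs : s.Nonempty) :
    ∑ π : Finpartition s, ∏ b ∈ π.parts, algCumulantOn φ b x = φ (∏ i ∈ s, x i) := by
  calc ∑ π : Finpartition s, ∏ b ∈ π.parts, algCumulantOn φ b x
      = ∑ π : Finpartition s, ∑ u : (∀ C : π.parts, Finpartition (C : Finset ι)),
          (∏ c ∈ (bindGrouping u).parts, (mobiusCoeff #c : B)) *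
            ∏ b ∈ (bindPi u).parts, φ (∏ i ∈ b, x i) := by
        refine sum_congr rfl fun π _ => ?_
        simp_rw [algCumulantOn_eq_sum_mobiusCoeff, ← prod_coe_sort π.parts, Fintype.prod_sum,
          prod_bindGrouping_parts, prod_bindPi_parts, prod_mul_distrib]
    _ = ∑ θ : Finpartition s, ∑ σ : Finpartition θ.parts,
          (∏ c ∈ σ.parts, (mobiusCoeff #c : B)) * ∏ b ∈ θ.parts, φ (∏ i ∈ b, x i) :=
        sum_sigmaBindEquiv fun θ σ =>
          (∏ c ∈ σ.parts, (mobiusCoeff #c : B)) * ∏ b ∈ θ.parts, φ (∏ i ∈ b, x i)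
    _ = ∑ θ : Finpartition s, if #θ.parts ≤ 1 then ∏ b ∈ θ.parts, φ (∏ i ∈ b, x i) else 0 := by
        refine sum_congr rfl fun θ _ => ?_
        rw [← sum_mul]
        simp_rw [← Int.cast_prod, ← Int.cast_sum, sum_prod_mobiusCoeff_card]
        split_ifs <;> simp
    _ = φ (∏ i ∈ s, x i) := by
        rw [sum_ite_card_parts_le_one hs, indiscrete_parts, prod_singleton]

theorem algCumulantOn_comp {F : Type*} [FunLike F A' B] [AddMonoidHomClass F A' B]
    (φ : A → A') (ψ : F) (s : Finset ι) (x : ι → A) :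
    algCumulantOn (fun a => ψ (φ a)) s x =
      ∑ π : Finpartition s, algCumulantOn ψ π.parts fun b => algCumulantOn φ b x := by
  symm
  calc ∑ π : Finpartition s, algCumulantOn ψ π.parts (fun b => algCumulantOn φ b x)
      = ∑ π : Finpartition s, ∑ σ : Finpartition π.parts,
          (mobiusCoeff #σ.parts : B) * ∏ c ∈ σ.parts, ψ (∏ b ∈ c, algCumulantOn φ b x) := rfl
    _ = ∑ γ : Finpartition s, ∑ u : (∀ C : γ.parts, Finpartition (C : Finset ι)),
          (mobiusCoeff #(bindGrouping u).parts : B) *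
            ∏ c ∈ (bindGrouping u).parts, ψ (∏ b ∈ c, algCumulantOn φ b x) :=
        (sum_sigmaBindEquiv fun θ σ =>
          (mobiusCoeff #σ.parts : B) * ∏ c ∈ σ.parts, ψ (∏ b ∈ c, algCumulantOn φ b x)).symm
    _ = ∑ γ : Finpartition s, (mobiusCoeff #γ.parts : B) *
          ∏ C : γ.parts, ∑ v : Finpartition (C : Finset ι),
            ψ (∏ b ∈ v.parts, algCumulantOn φ b x) := by
        simp_rw [card_bindGrouping_parts, prod_bindGrouping_parts, Fintype.prod_sum, mul_sum]
    _ = ∑ γ : Finpartition s,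
          (mobiusCoeff #γ.parts : B) * ∏ C ∈ γ.parts, ψ (φ (∏ i ∈ C, x i)) := by
        refine sum_congr rfl fun γ _ => ?_
        rw [← prod_coe_sort γ.parts]
        congr 1
        refine prod_congr rfl fun C _ => ?_
        rw [← map_sum, sum_prod_algCumulantOn φ x (γ.nonempty_of_mem_parts C.2)]

end Cumulants

theorem brillinger_formula_general {A A' : Type*} [CommRing A] [CommRing A']
    [Algebra ℝ A] [Algebra ℝ A']
    (Eid : A →ₗ[ℝ] A') (Ebul : A' →ₗ[ℝ] ℝ)
    {n : ℕ} (x : Fin n → A) :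
    algCumulantOn (fun a => Ebul (Eid a)) (Finset.univ : Finset (Fin n)) x =
      ∑ π : Finpartition (Finset.univ : Finset (Fin n)),
        algCumulantOn (fun a => Ebul a) π.parts
          (fun blk => algCumulantOn (fun a => Eid a) blk x) :=
  algCumulantOn_comp (fun a => Eid a) Ebul univ x

/-- Brillinger's formula: if the expectation `E : A → ℝ` factors as
`E = E^• ∘ E^id` through a commutative intermediate algebra `A^•`, where
`E^id : A → A^•` and `E^• : A^• → ℝ` are unital linear maps, then for (commuting)
elements `x₁,…,xₙ` of the commutative algebra `A`,
`k(x₁,…,xₙ) = ∑_π k^•[ k^id(x_i : i ∈ π_j) : j ]`, summed over all set partitions `π`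
of `{1,…,n}`, where `k`, `k^•`, `k^id` are the cumulants associated with `E`, `E^•`,
`E^id` respectively. -/
theorem brillinger_formula {A A' : Type*} [CommRing A] [CommRing A']
    [Algebra ℝ A] [Algebra ℝ A']
    (Eid : A →ₗ[ℝ] A') (Ebul : A' →ₗ[ℝ] ℝ)
    (hEid1 : Eid 1 = 1) (hEbul1 : Ebul 1 = 1)
    {n : ℕ} (x : Fin n → A) :
    algCumulantOn (fun a => Ebul (Eid a)) (Finset.univ : Finset (Fin n)) x =
      ∑ π : Finpartition (Finset.univ : Finset (Fin n)),
        algCumulantOn (fun a => Ebul a) π.parts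
          (fun blk => algCumulantOn (fun a => Eid a) blk x) :=
  brillinger_formula_general Eid Ebul x
end

section
/- Leonov–Shiryaev formula for cumulants of products: let i_1 < i_2 < ... < i_{n+1} be integers and X_{i_1+1},...,X_{i_{n+1}} bounded commuting random variables. Then k(Π_{i_1<j≤i_2} X_j, ..., Π_{i_n<j≤i_{n+1}} X_j) = Σ_π k_π(X_{i_1+1},...,X_{i_{n+1}}), where the sum runs over all set partitions π of {i_1+1,...,i_{n+1}} such that π ∨ {ρ_1,...,ρ_n} is the one-block partition, with ρ_s = {i_s+1,...,i_{s+1}}. -/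
open Finset MeasureTheory

/-- The joint classical cumulant of the subfamily `(X i : i ∈ s)` of random variables,
given by the Möbius-inversion (partition) formula, equivalent to the coefficient
`∂ⁿ/∂t₁⋯∂tₙ|₀ log E[exp(∑ tᵢ Xᵢ)]` of the log moment generating function. -/
noncomputable def jointCumulantOn {Ω : Type*} [MeasurableSpace Ω] (μ : Measure Ω)
    {n : ℕ} (X : Fin n → Ω → ℝ) (s : Finset (Fin n)) : ℝ :=
  ∑ π : Finpartition s,
    (-1 : ℝ) ^ (π.parts.card - 1) * (π.parts.card - 1).factorial *
      ∏ B ∈ π.parts, ∫ ω, (∏ i ∈ B, X i ω) ∂μ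

/-- The joint classical cumulant `k(X₁,…,Xₙ)`. -/
noncomputable def jointCumulant {Ω : Type*} [MeasurableSpace Ω] (μ : Measure Ω)
    {n : ℕ} (X : Fin n → Ω → ℝ) : ℝ :=
  jointCumulantOn μ X Finset.univ

open scoped Classical

/-!
Write `m(C) = E[∏_{i ∈ C} X_i]` and `μ` for the Möbius function of the lattice of set partitions,
so that `k(B) = ∑_{p ⊢ B} μ(p, 1̂) ∏_{C ∈ p} m(C)`. Partitions of the index set of the products
correspond order-isomorphically to the partitions `σ ≥ ρ`, so the left side is
`∑_{σ ≥ ρ} μ(σ, 1̂) m_σ`. Expanding each cumulant on the right side and exchanging sums gives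
`∑_κ m_κ ∑_{π ≥ κ, π ⊔ ρ = 1̂} μ(κ, π)`, and by Weisner's theorem the inner sum is
`[ρ ≤ κ] μ(κ, 1̂)`.
-/

namespace Finpartition

variable {α : Type*} [DecidableEq α] {s : Finset α}

noncomputable abbrev lattice : Lattice (Finpartition s) where
  __ := (inferInstance : SemilatticeInf (Finpartition s))
  sup p q := (univ.filter fun y => p ≤ y ∧ q ≤ y).inf' ⟨⊤, by simp⟩ id
  le_sup_left p q := le_inf' _ _ fun y hy => (mem_filter.1 hy).2.1
  le_sup_right p q := le_inf' _ _ fun y hy => (mem_filter.1 hy).2.2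
  sup_le p q y hp hq := inf'_le _ (mem_filter.2 ⟨mem_univ _, hp, hq⟩)

end Finpartition

section

variable {α : Type*} [DecidableEq α]

attribute [local instance] Finpartition.lattice

namespace Finpartition

variable {s : Finset α}

theorem sup_eq_top_iff {p q : Finpartition s} :
    p ⊔ q = ⊤ ↔ ∀ σ : Finpartition s, p ≤ σ → q ≤ σ → σ = ⊤ :=
  ⟨fun h _ hp hq => top_unique (h ▸ sup_le hp hq), fun h => h _ le_sup_left le_sup_right⟩

theorem parts_restrict_of_le {κ z : Finpartition s} (hκz : κ ≤ z) {B : Finset α}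
    (hB : B ∈ z.parts) : (κ.restrict (z.le hB)).parts = κ.parts.filter (· ⊆ B) := by
  ext C
  simp only [restrict, mem_erase, mem_image, mem_filter, ne_eq, bot_eq_empty]
  constructor
  · rintro ⟨hC, D, hD, rfl⟩
    obtain ⟨B', hB', hDB'⟩ := hκz hD
    obtain ⟨a, ha⟩ := nonempty_iff_ne_empty.2 hC
    have ha' := mem_inter.1 ha
    obtain rfl := z.eq_of_mem_parts hB hB' ha'.2 (hDB' ha'.1)
    rw [inf_eq_left.2 hDB']
    exact ⟨hD, hDB'⟩
  · rintro ⟨hC, hCB⟩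
    exact ⟨κ.ne_empty hC, C, hC, inf_eq_left.2 hCB⟩

theorem biUnion_filter_subset_parts {κ z : Finpartition s} (hκz : κ ≤ z) :
    z.parts.biUnion (fun B => κ.parts.filter (· ⊆ B)) = κ.parts := by
  ext C
  simp only [mem_biUnion, mem_filter]
  exact ⟨fun ⟨_, _, hC, _⟩ => hC, fun hC => (hκz hC).imp fun _ h => ⟨h.1, hC, h.2⟩⟩

theorem pairwiseDisjoint_filter_subset_parts (κ z : Finpartition s) :
    (z.parts : Set (Finset α)).PairwiseDisjoint (fun B => κ.parts.filter (· ⊆ B)) := by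
  intro B hB B' hB' hBB'
  refine Finset.disjoint_left.2 fun C hC hC' => κ.ne_empty (mem_filter.1 hC).1 ?_
  exact subset_empty.1 <| (disjoint_iff_inter_eq_empty.1 (z.disjoint hB hB' hBB')) ▸
    subset_inter (mem_filter.1 hC).2 (mem_filter.1 hC').2

theorem prod_prod_filter_subset_parts {M : Type*} [CommMonoid M] {κ z : Finpartition s}
    (hκz : κ ≤ z) (g : Finset α → M) :
    ∏ B ∈ z.parts, ∏ C ∈ κ.parts.filter (· ⊆ B), g C = ∏ C ∈ κ.parts, g C := by
  rw [← prod_biUnion (pairwiseDisjoint_filter_subset_parts κ z), biUnion_filter_subset_parts hκz]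

theorem filter_subset_parts_bind (z : Finpartition s) (Q : ∀ B ∈ z.parts, Finpartition B)
    {B : Finset α} (hB : B ∈ z.parts) : (z.bind Q).parts.filter (· ⊆ B) = (Q B hB).parts := by
  ext C
  simp only [mem_filter, mem_bind]
  constructor
  · rintro ⟨⟨A, hA, hCA⟩, hCB⟩
    obtain ⟨a, ha⟩ := (Q A hA).nonempty_of_mem_parts hCA
    obtain rfl := z.eq_of_mem_parts hA hB ((Q A hA).le hCA ha) (hCB ha)
    exact hCA
  · exact fun hC => ⟨⟨B, hB, hC⟩, (Q B hB).le hC⟩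

theorem bind_le (z : Finpartition s) (Q : ∀ B ∈ z.parts, Finpartition B) : z.bind Q ≤ z := by
  intro C hC
  obtain ⟨A, hA, hCA⟩ := mem_bind.1 hC
  exact ⟨A, hA, (Q A hA).le hCA⟩

theorem bind_restrict_of_le {κ z : Finpartition s} (hκz : κ ≤ z) :
    z.bind (fun _ hB => κ.restrict (z.le hB)) = κ := by
  ext C
  rw [mem_bind]
  constructor
  · rintro ⟨A, hA, hC⟩
    rw [parts_restrict_of_le hκz hA] at hC
    exact (mem_filter.1 hC).1
  · intro hC
    obtain ⟨B, hB, hCB⟩ := hκz hC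
    exact ⟨B, hB, by rw [parts_restrict_of_le hκz hB]; exact mem_filter.2 ⟨hC, hCB⟩⟩

/-- Refinements of `z` correspond to families of partitions of the blocks of `z`. -/
theorem prod_sum_eq_sum_le {R : Type*} [CommSemiring R] (z : Finpartition s)
    (Φ : Finset (Finset α) → R) :
    ∏ B ∈ z.parts, ∑ p : Finpartition B, Φ p.parts =
      ∑ κ ∈ univ.filter (· ≤ z), ∏ B ∈ z.parts, Φ (κ.parts.filter (· ⊆ B)) := by
  rw [← prod_attach, ← univ_eq_attach, prod_univ_sum]
  refine sum_nbij' (fun q => z.bind fun B hB => q ⟨B, hB⟩)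
    (fun κ B => κ.restrict (z.le B.2)) (by simp [bind_le]) (by simp) ?_ ?_ ?_
  · intro q _
    ext B : 1
    apply Finpartition.ext
    rw [parts_restrict_of_le (bind_le _ _) B.2, filter_subset_parts_bind]
  · intro κ hκ
    exact bind_restrict_of_le (mem_filter.1 hκ).2
  · intro q _
    rw [← prod_attach z.parts]
    exact prod_congr rfl fun B _ => by rw [filter_subset_parts_bind]

end Finpartition

section Mobius

variable (R : Type*) [CommRing R]

/-- `μ(π, 1̂)` in the lattice of set partitions when `π` has `k` blocks (with junk value `1` at
`k = 0`). -/
def partitionMobius (k : ℕ) : R := (-1) ^ (k - 1) * (k - 1).factorial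

theorem partitionMobius_add_two (k : ℕ) :
    partitionMobius R (k + 2) = -((k + 1) * partitionMobius R (k + 1)) := by
  rw [partitionMobius, partitionMobius, show k + 2 - 1 = k + 1 from rfl, Nat.add_sub_cancel,
    Nat.factorial_succ]
  push_cast
  ring

theorem sum_partitionMobius_filter_mem {s : Finset α} {a : α} (ha : a ∈ s) :
    ∑ t ∈ s.powerset.filter (a ∈ ·), partitionMobius R #t * (if #(s \ t) ≤ 1 then 1 else 0) =
      if #s ≤ 1 then 1 else 0 := by
  have hreindex : ∑ t ∈ s.powerset.filter (a ∈ ·),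
      partitionMobius R #t * (if #(s \ t) ≤ 1 then 1 else 0) =
      ∑ u ∈ (s.erase a).powerset, partitionMobius R (#s - #u) * (if #u ≤ 1 then 1 else 0) := by
    refine sum_nbij' (s \ ·) (s \ ·) ?_ ?_ ?_ ?_ ?_
    · intro t ht
      rw [mem_filter, mem_powerset] at ht
      exact mem_powerset.2 fun x hx =>
        mem_erase.2 ⟨fun h => (mem_sdiff.1 hx).2 (h ▸ ht.2), (mem_sdiff.1 hx).1⟩
    · intro u hu
      exact mem_filter.2 ⟨mem_powerset.2 sdiff_subset,
        mem_sdiff.2 ⟨ha, fun h => (mem_erase.1 (mem_powerset.1 hu h)).1 rfl⟩⟩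
    · intro t ht
      exact Finset.sdiff_sdiff_eq_self (mem_powerset.1 (mem_filter.1 ht).1)
    · intro u hu
      exact Finset.sdiff_sdiff_eq_self ((mem_powerset.1 hu).trans (erase_subset a s))
    · intro t ht
      rw [card_sdiff_of_subset (mem_powerset.1 (mem_filter.1 ht).1),
        Nat.sub_sub_self (card_le_card (mem_powerset.1 (mem_filter.1 ht).1))]
  rw [hreindex, sum_powerset_apply_card (fun m => partitionMobius R (#s - m) *
    (if m ≤ 1 then 1 else 0)), card_erase_of_mem ha]
  obtain ⟨k, hk⟩ := Nat.exists_eq_add_one.2 (card_pos.2 ⟨a, ha⟩)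
  rw [hk, Nat.add_sub_cancel]
  rcases k with _ | k
  · simp [partitionMobius]
  · simp [sum_range_succ', partitionMobius_add_two]

namespace Finpartition

variable {s : Finset α}

/-- `μ(0̂, l)` in the lattice of set partitions. -/
def mobiusFromBot (l : Finpartition s) : R := ∏ P ∈ l.parts, partitionMobius R #P

variable {R}

theorem parts_avoid_of_mem (l : Finpartition s) {t : Finset α} (ht : t ∈ l.parts) :
    (l.avoid t).parts = l.parts.erase t := by
  ext C
  rw [mem_avoid, mem_erase]
  constructor
  · rintro ⟨D, hD, hDt, rfl⟩
    have hDt' : D ≠ t := by rintro rfl; exact hDt le_rfl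
    have hdis : Disjoint D t := l.disjoint hD ht hDt'
    rw [Finset.sdiff_eq_self_of_disjoint hdis]
    exact ⟨hDt', hD⟩
  · rintro ⟨hCt, hC⟩
    have hdis : Disjoint C t := l.disjoint hC ht hCt
    refine ⟨C, hC, fun hle => l.ne_bot hC (le_bot_iff.1 (hdis le_rfl hle)), ?_⟩
    exact Finset.sdiff_eq_self_of_disjoint hdis

/-- The partitions of `s` in which `a` lies in the block `t` are those of `s \ t` extended by
`t`. -/
theorem sum_filter_part_eq_mul {a : α} {t : Finset α} (hts : t ⊆ s) (hat : a ∈ t) :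
    ∑ l ∈ univ.filter (fun l : Finpartition s => l.part a = t), l.mobiusFromBot R =
      partitionMobius R #t * ∑ l : Finpartition (s \ t), l.mobiusFromBot R := by
  have ht : t ≠ ⊥ := ne_empty_of_mem hat
  have hsup : (s \ t) ⊔ t = s := sdiff_union_of_subset hts
  have ht_notMem (l : Finpartition (s \ t)) : t ∉ l.parts :=
    fun h => (mem_sdiff.1 (l.le h hat)).2 hat
  rw [mul_sum]
  refine sum_nbij' (fun l : Finpartition s => l.avoid t)
    (fun l : Finpartition (s \ t) => l.extend ht sdiff_disjoint hsup) (by simp) ?_ ?_ ?_ ?_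
  · exact fun l _ => mem_filter.2 ⟨mem_univ _, part_eq_of_mem _ (mem_insert_self t _) hat⟩
  · intro l hl
    have htl : t ∈ l.parts := (mem_filter.1 hl).2 ▸ l.part_mem.2 (hts hat)
    apply Finpartition.ext
    rw [extend_parts, parts_avoid_of_mem l htl, insert_erase htl]
  · intro l _
    apply Finpartition.ext
    rw [parts_avoid_of_mem _ (mem_insert_self t _), extend_parts, erase_insert (ht_notMem l)]
  · intro l hl
    have htl : t ∈ l.parts := (mem_filter.1 hl).2 ▸ l.part_mem.2 (hts hat)
    rw [mobiusFromBot, mobiusFromBot, parts_avoid_of_mem l htl,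
      mul_prod_erase _ (fun P => partitionMobius R #P) htl]

theorem sum_mobiusFromBot (s : Finset α) :
    ∑ l : Finpartition s, l.mobiusFromBot R = if #s ≤ 1 then 1 else 0 := by
  induction s using Finset.strongInduction with
  | _ s ih =>
  rcases s.eq_empty_or_nonempty with rfl | ⟨a, ha⟩
  · have : Unique (Finpartition (∅ : Finset α)) := inferInstanceAs (Unique (Finpartition ⊥))
    rw [Fintype.sum_subsingleton _ ⊥]
    simp [mobiusFromBot]
  have hpart (l : Finpartition s) : l.part a ∈ s.powerset.filter (a ∈ ·) :=
    mem_filter.2 ⟨mem_powerset.2 (l.part_subset a), l.mem_part_self.2 ha⟩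
  rw [← sum_fiberwise_of_maps_to (fun l _ => hpart l), ← sum_partitionMobius_filter_mem R ha]
  refine sum_congr rfl fun t ht => ?_
  obtain ⟨hts, hat⟩ := mem_filter.1 ht
  rw [sum_filter_part_eq_mul (mem_powerset.1 hts) hat,
    ih _ (sdiff_ssubset (mem_powerset.1 hts) ⟨a, hat⟩)]

end Finpartition

end Mobius

namespace Finpartition

variable {R : Type*} [CommRing R] {s : Finset α}

theorem eq_bot_iff_forall_card_le_one {z : Finpartition s} : z = ⊥ ↔ ∀ B ∈ z.parts, #B ≤ 1 := by
  constructor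
  · rintro rfl B hB
    obtain ⟨a, -, rfl⟩ := mem_bot_iff.1 hB
    exact (card_singleton a).le
  · refine fun h => le_bot_iff.1 fun B hB => ⟨B, ?_, le_rfl⟩
    obtain ⟨a, rfl⟩ := card_eq_one.1 <| (h B hB).antisymm (z.nonempty_of_mem_parts hB).card_pos
    exact mem_bot_iff.2 ⟨a, z.le hB (mem_singleton_self a), rfl⟩

theorem mobiusFromBot_top : (⊤ : Finpartition s).mobiusFromBot R = partitionMobius R #s := by
  rcases subset_singleton_iff.1 (parts_top_subset s) with h | h
  · rw [mobiusFromBot, h, prod_empty, parts_eq_empty_iff.1 h]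
    simp [partitionMobius]
  · rw [mobiusFromBot, h, prod_singleton]

theorem sum_mobiusFromBot_le (z : Finpartition s) :
    ∑ l ∈ univ.filter (· ≤ z), l.mobiusFromBot R = if z = ⊥ then 1 else 0 := by
  rw [sum_congr rfl fun l hl => by
      rw [mobiusFromBot, ← prod_prod_filter_subset_parts (mem_filter.1 hl).2],
    ← prod_sum_eq_sum_le z fun P => ∏ C ∈ P, partitionMobius R #C]
  simp only [← mobiusFromBot.eq_1, sum_mobiusFromBot, prod_boole, eq_bot_iff_forall_card_le_one]

/-- Weisner's theorem for `μ(0̂, ·)` in the partition lattice. -/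
theorem sum_mobiusFromBot_sup_eq {r : Finpartition s} (hr : r ≠ ⊥) {z : Finpartition s}
    (hrz : r ≤ z) : ∑ l ∈ univ.filter (· ⊔ r = z), l.mobiusFromBot R = 0 := by
  have : WellFoundedLT (Finpartition s) := Finite.to_wellFoundedLT
  induction z using WellFoundedLT.induction with
  | ind z ih =>
  have hfiber (y : Finpartition s) (hyz : y ≤ z) :
      (univ.filter (· ≤ z)).filter (· ⊔ r = y) = univ.filter (· ⊔ r = y) := by
    ext l
    simp only [mem_filter, mem_univ, true_and, and_iff_right_iff_imp]
    rintro rfl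
    exact le_sup_left.trans hyz
  have hmaps (l) (hl : l ∈ univ.filter (· ≤ z)) :
      l ⊔ r ∈ univ.filter (fun y => r ≤ y ∧ y ≤ z) :=
    mem_filter.2 ⟨mem_univ _, le_sup_right, sup_le (mem_filter.1 hl).2 hrz⟩
  have hsum := sum_fiberwise_of_maps_to hmaps (fun l => l.mobiusFromBot R)
  rw [sum_mobiusFromBot_le, if_neg (ne_bot_of_le_ne_bot hr hrz),
    sum_eq_single_of_mem z (mem_filter.2 ⟨mem_univ _, hrz, le_rfl⟩), hfiber z le_rfl] at hsum
  · exact hsum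
  · intro y hy hyz
    obtain ⟨hry, hyz'⟩ := (mem_filter.1 hy).2
    rw [hfiber y hyz']
    exact ih y (lt_of_le_of_ne hyz' hyz) hry

theorem sum_mobiusFromBot_sup_eq_top (r : Finpartition s) :
    ∑ l ∈ univ.filter (· ⊔ r = ⊤), l.mobiusFromBot R =
      if r = ⊥ then partitionMobius R #s else 0 := by
  split_ifs with hr
  · subst hr
    simp only [sup_bot_eq, filter_eq', mem_univ, if_true, sum_singleton, mobiusFromBot_top]
  · exact sum_mobiusFromBot_sup_eq hr le_top

end Finpartition

namespace Finpartition

variable {β : Type*} {s : Finset α} {ρ : Finpartition s} {T : Finset β} {F : β → Finset α}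

structure IsEnumeratedBy (ρ : Finpartition s) (T : Finset β) (F : β → Finset α) : Prop where
  injOn : Set.InjOn F T
  parts_eq : ρ.parts = T.image F

namespace IsEnumeratedBy

theorem mem_parts (h : ρ.IsEnumeratedBy T F) {b : β} (hb : b ∈ T) : F b ∈ ρ.parts :=
  h.parts_eq ▸ mem_image_of_mem F hb

theorem nonempty (h : ρ.IsEnumeratedBy T F) {b : β} (hb : b ∈ T) : (F b).Nonempty :=
  ρ.nonempty_of_mem_parts (h.mem_parts hb)

theorem disjoint (h : ρ.IsEnumeratedBy T F) {b b' : β} (hb : b ∈ T) (hb' : b' ∈ T)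
    (hbb' : b ≠ b') : Disjoint (F b) (F b') :=
  ρ.disjoint (h.mem_parts hb) (h.mem_parts hb') fun e => hbb' (h.injOn hb hb' e)

theorem biUnion_eq (h : ρ.IsEnumeratedBy T F) : T.biUnion F = s := by
  rw [← ρ.biUnion_parts, h.parts_eq, image_biUnion]
  rfl

theorem eq_of_subset_biUnion (h : ρ.IsEnumeratedBy T F) {P : Finset β} (hPT : P ⊆ T) {b : β}
    (hb : b ∈ T) (hbP : F b ⊆ P.biUnion F) : b ∈ P := by
  obtain ⟨a, ha⟩ := h.nonempty hb
  obtain ⟨b', hb'P, hab'⟩ := mem_biUnion.1 (hbP ha)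
  by_contra hbP'
  have hbb' : b ≠ b' := by rintro rfl; exact hbP' hb'P
  exact Finset.disjoint_left.1 (h.disjoint hb (hPT hb'P) hbb') ha hab'

theorem filter_subset_biUnion (h : ρ.IsEnumeratedBy T F) {P : Finset β} (hPT : P ⊆ T) :
    T.filter (F · ⊆ P.biUnion F) = P := by
  ext b
  rw [mem_filter]
  exact ⟨fun ⟨hb, hbP⟩ => h.eq_of_subset_biUnion hPT hb hbP,
    fun hbP => ⟨hPT hbP, subset_biUnion_of_mem F hbP⟩⟩

theorem exists_mem_subset (h : ρ.IsEnumeratedBy T F) {σ : Finpartition s} (hρσ : ρ ≤ σ)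
    {C : Finset α} (hC : C ∈ σ.parts) {a : α} (ha : a ∈ C) : ∃ b ∈ T, a ∈ F b ∧ F b ⊆ C := by
  obtain ⟨b, hb, hab⟩ := mem_biUnion.1 (h.biUnion_eq ▸ σ.le hC ha)
  obtain ⟨C', hC', hbC'⟩ := hρσ (h.mem_parts hb)
  obtain rfl := σ.eq_of_mem_parts hC hC' ha (hbC' hab)
  exact ⟨b, hb, hab, hbC'⟩

variable [DecidableEq β]

def glue (h : ρ.IsEnumeratedBy T F) (l : Finpartition T) : Finpartition s where
  parts := l.parts.image (·.biUnion F)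
  supIndep := by
    rw [supIndep_iff_pairwiseDisjoint, coe_image]
    rintro _ ⟨P, hP, rfl⟩ _ ⟨Q, hQ, rfl⟩ hPQ
    refine (disjoint_biUnion_left _ _ _).2 fun b hb =>
      (disjoint_biUnion_right _ _ _).2 fun b' hb' => ?_
    refine h.disjoint (l.le hP hb) (l.le hQ hb') ?_
    rintro rfl
    exact hPQ (congrArg (·.biUnion F) (l.eq_of_mem_parts hP hQ hb hb'))
  sup_parts := by
    rw [sup_image, Function.id_comp, sup_eq_biUnion, ← h.biUnion_eq, ← biUnion_biUnion]
    exact congrArg (·.biUnion F) l.biUnion_parts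
  bot_notMem := by
    rw [bot_eq_empty, mem_image]
    rintro ⟨P, hP, hPF⟩
    obtain ⟨b, hb⟩ := l.nonempty_of_mem_parts hP
    obtain ⟨a, ha⟩ := h.nonempty (l.le hP hb)
    exact notMem_empty a (hPF ▸ mem_biUnion.2 ⟨b, hb, ha⟩)

theorem le_glue (h : ρ.IsEnumeratedBy T F) (l : Finpartition T) : ρ ≤ h.glue l := by
  intro C hC
  rw [h.parts_eq] at hC
  obtain ⟨b, hb, rfl⟩ := mem_image.1 hC
  obtain ⟨P, hP, hbP⟩ := l.exists_mem hb
  exact ⟨P.biUnion F, mem_image_of_mem _ hP, subset_biUnion_of_mem F hbP⟩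

theorem glue_le_glue_iff (h : ρ.IsEnumeratedBy T F) {l l' : Finpartition T} :
    h.glue l ≤ h.glue l' ↔ l ≤ l' := by
  constructor
  · intro hle P hP
    obtain ⟨_, hC, hPC⟩ := hle (mem_image_of_mem (·.biUnion F) hP)
    obtain ⟨Q, hQ, rfl⟩ := mem_image.1 hC
    refine ⟨Q, hQ, fun b hb => ?_⟩
    exact h.eq_of_subset_biUnion (l'.le hQ) (l.le hP hb) ((subset_biUnion_of_mem F hb).trans hPC)
  · rintro hle _ hC
    obtain ⟨P, hP, rfl⟩ := mem_image.1 hC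
    obtain ⟨Q, hQ, hPQ⟩ := hle hP
    exact ⟨Q.biUnion F, mem_image_of_mem _ hQ, biUnion_subset_biUnion_of_subset_left F hPQ⟩

def unglue (h : ρ.IsEnumeratedBy T F) (σ : Set.Ici ρ) : Finpartition T where
  parts := σ.1.parts.image fun C => T.filter (F · ⊆ C)
  supIndep := by
    rw [supIndep_iff_pairwiseDisjoint, coe_image]
    rintro _ ⟨C, hC, rfl⟩ _ ⟨D, hD, rfl⟩ hCD
    refine Finset.disjoint_left.2 fun b hbC hbD => ?_
    obtain ⟨hb, hFC⟩ := mem_filter.1 hbC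
    obtain ⟨a, ha⟩ := h.nonempty hb
    have hCD' : C ≠ D := by rintro rfl; exact hCD rfl
    exact Finset.disjoint_left.1 (σ.1.disjoint hC hD hCD') (hFC ha) ((mem_filter.1 hbD).2 ha)
  sup_parts := by
    refine (Finset.sup_le fun _ hP => ?_).antisymm fun b hb => ?_
    · obtain ⟨C, -, rfl⟩ := mem_image.1 hP
      exact filter_subset _ _
    · obtain ⟨C, hC, hbC⟩ := σ.2 (h.mem_parts hb)
      exact le_sup (f := id) (mem_image_of_mem (fun C => T.filter (F · ⊆ C)) hC)
        (mem_filter.2 ⟨hb, hbC⟩)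
  bot_notMem := by
    rw [bot_eq_empty, mem_image]
    rintro ⟨C, hC, hCe⟩
    obtain ⟨a, ha⟩ := σ.1.nonempty_of_mem_parts hC
    obtain ⟨b, hb, -, hbC⟩ := h.exists_mem_subset σ.2 hC ha
    exact notMem_empty b (hCe ▸ mem_filter.2 ⟨hb, hbC⟩)

theorem glue_unglue (h : ρ.IsEnumeratedBy T F) (σ : Set.Ici ρ) : h.glue (h.unglue σ) = σ := by
  apply Finpartition.ext
  simp only [glue, unglue, image_image]
  conv_rhs => rw [← image_id (s := σ.1.parts)]
  refine image_congr fun D hD => ?_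
  refine (biUnion_subset.2 fun b hb => (mem_filter.1 hb).2).antisymm fun a ha => ?_
  obtain ⟨b, hb, hab, hbD⟩ := h.exists_mem_subset σ.2 hD ha
  exact mem_biUnion.2 ⟨b, mem_filter.2 ⟨hb, hbD⟩, hab⟩

theorem unglue_glue (h : ρ.IsEnumeratedBy T F) (l : Finpartition T) :
    h.unglue ⟨h.glue l, h.le_glue l⟩ = l := by
  apply Finpartition.ext
  simp only [glue, unglue, image_image]
  conv_rhs => rw [← image_id (s := l.parts)]
  exact image_congr fun P hP => h.filter_subset_biUnion (l.le hP)

def glueOrderIso (h : ρ.IsEnumeratedBy T F) : Finpartition T ≃o Set.Ici ρ where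
  toFun l := ⟨h.glue l, h.le_glue l⟩
  invFun := h.unglue
  left_inv := h.unglue_glue
  right_inv σ := Subtype.ext (h.glue_unglue σ)
  map_rel_iff' := h.glue_le_glue_iff

theorem sum_glue {M : Type*} [AddCommMonoid M] (h : ρ.IsEnumeratedBy T F)
    (G : Finpartition s → M) :
    ∑ l : Finpartition T, G (h.glue l) = ∑ σ ∈ univ.filter (ρ ≤ ·), G σ := by
  rw [sum_subtype (univ.filter (ρ ≤ ·)) (p := (· ∈ Set.Ici ρ)) (by simp)]
  exact Fintype.sum_equiv h.glueOrderIso.toEquiv _ _ fun _ => rfl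

theorem injOn_biUnion (h : ρ.IsEnumeratedBy T F) (l : Finpartition T) :
    Set.InjOn (fun P : Finset β => P.biUnion F) l.parts := by
  intro P hP Q hQ hPQ
  rw [← h.filter_subset_biUnion (l.le hP), ← h.filter_subset_biUnion (l.le hQ)]
  simp only [hPQ]

theorem prod_glue_parts {M : Type*} [CommMonoid M] (h : ρ.IsEnumeratedBy T F)
    (l : Finpartition T) (g : Finset α → M) :
    ∏ C ∈ (h.glue l).parts, g C = ∏ P ∈ l.parts, g (P.biUnion F) :=
  prod_image (h.injOn_biUnion l)

theorem card_glue_parts (h : ρ.IsEnumeratedBy T F) (l : Finpartition T) :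
    #(h.glue l).parts = #l.parts :=
  card_image_of_injOn (h.injOn_biUnion l)

end IsEnumeratedBy

end Finpartition

variable {R : Type*} [CommRing R]

/-- The cumulant `∑_π μ(π, 1̂) ∏_{C ∈ π} m(C)` of the block `B`, computed from the moments `m`. -/
def cumulantOfMoments (m : Finset α → R) (B : Finset α) : R :=
  ∑ p : Finpartition B, partitionMobius R #p.parts * ∏ C ∈ p.parts, m C

namespace Finpartition

variable {s : Finset α}

theorem prod_cumulantOfMoments (π : Finpartition s) (m : Finset α → R) :
    ∏ B ∈ π.parts, cumulantOfMoments m B =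
      ∑ κ ∈ univ.filter (· ≤ π),
        (∏ B ∈ π.parts, partitionMobius R #(κ.parts.filter (· ⊆ B))) * ∏ C ∈ κ.parts, m C := by
  simp only [cumulantOfMoments]
  rw [prod_sum_eq_sum_le π fun P => partitionMobius R #P * ∏ C ∈ P, m C]
  refine sum_congr rfl fun κ hκ => ?_
  rw [prod_mul_distrib, prod_prod_filter_subset_parts (mem_filter.1 hκ).2]

/-- The dual form of Weisner's theorem, `∑_{π ≥ κ, π ⊔ ρ = 1̂} μ(κ, π) = [ρ ≤ κ] μ(κ, 1̂)`, proved
in the partition lattice of the blocks of `κ`, which is isomorphic to `[κ, 1̂]`. -/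
theorem sum_prod_partitionMobius_sup_eq_top (κ ρ : Finpartition s) :
    ∑ π ∈ univ.filter (fun π => κ ≤ π ∧ π ⊔ ρ = ⊤),
        ∏ B ∈ π.parts, partitionMobius R #(κ.parts.filter (· ⊆ B)) =
      if ρ ≤ κ then partitionMobius R #κ.parts else 0 := by
  have h : κ.IsEnumeratedBy κ.parts id := ⟨Set.injOn_id _, image_id.symm⟩
  set e := h.glueOrderIso
  set r := e.symm ⟨κ ⊔ ρ, Set.mem_Ici.2 le_sup_left⟩
  have hsup (l : Finpartition κ.parts) : h.glue l ⊔ ρ = ⊤ ↔ l ⊔ r = ⊤ := by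
    have : h.glue l ⊔ ρ = (e (l ⊔ r) : Finpartition s) := by
      rw [map_sup, OrderIso.apply_symm_apply, Set.Ici.coe_sup]
      show _ = h.glue l ⊔ (κ ⊔ ρ)
      rw [← sup_assoc, sup_eq_left.2 (h.le_glue l)]
    rw [this, ← Set.Ici.coe_top κ, Subtype.coe_inj, map_eq_top_iff]
  have hweight (l : Finpartition κ.parts) :
      ∏ B ∈ (h.glue l).parts, partitionMobius R #(κ.parts.filter (· ⊆ B)) =
        l.mobiusFromBot R := by
    rw [h.prod_glue_parts]
    exact prod_congr rfl fun P hP => congrArg (partitionMobius R <| # ·)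
      (h.filter_subset_biUnion (l.le hP))
  have hr : r = ⊥ ↔ ρ ≤ κ := by
    rw [← map_eq_bot_iff e, OrderIso.apply_symm_apply, ← Subtype.coe_inj, Set.Ici.coe_bot,
      sup_eq_left]
  rw [← filter_filter, sum_filter, ← h.sum_glue]
  simp only [hsup, hweight, ← sum_filter, sum_mobiusFromBot_sup_eq_top, hr]

theorem IsEnumeratedBy.cumulantOfMoments_biUnion {β : Type*} [DecidableEq β] {ρ : Finpartition s}
    {T : Finset β} {F : β → Finset α} (h : ρ.IsEnumeratedBy T F) (m : Finset α → R) :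
    cumulantOfMoments (fun P => m (P.biUnion F)) T =
      ∑ π ∈ univ.filter (· ⊔ ρ = ⊤), ∏ B ∈ π.parts, cumulantOfMoments m B := by
  have hlhs : cumulantOfMoments (fun P => m (P.biUnion F)) T =
      ∑ σ ∈ univ.filter (ρ ≤ ·), partitionMobius R #σ.parts * ∏ C ∈ σ.parts, m C := by
    rw [cumulantOfMoments, ← h.sum_glue]
    exact sum_congr rfl fun l _ => by rw [h.card_glue_parts, h.prod_glue_parts]
  simp only [prod_cumulantOfMoments]
  rw [hlhs, sum_comm' (t' := univ) (s' := fun κ => univ.filter fun π => κ ≤ π ∧ π ⊔ ρ = ⊤)]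
  · rw [sum_filter]
    refine sum_congr rfl fun κ _ => ?_
    rw [← sum_mul, sum_prod_partitionMobius_sup_eq_top, ite_mul, zero_mul]
  · intro π κ
    simp only [mem_filter, mem_univ, true_and]
    tauto

end Finpartition

end

theorem leonov_shiryaev_cumulants_of_products_general {Ω : Type*} [MeasurableSpace Ω]
    (μ : Measure Ω) {N n : ℕ}
    (X : Fin N → Ω → ℝ)
    (c : Fin (n + 1) → ℕ) (hc : StrictMono c)
    (ρ : Finpartition (Finset.univ : Finset (Fin N)))
    (hρ : ρ.parts = Finset.image
      (fun s : Fin n => Finset.univ.filter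
        (fun j : Fin N => c s.castSucc ≤ (j : ℕ) ∧ (j : ℕ) < c s.succ)) Finset.univ) :
    jointCumulant μ (fun s : Fin n => fun ω =>
        ∏ j ∈ Finset.univ.filter
          (fun j : Fin N => c s.castSucc ≤ (j : ℕ) ∧ (j : ℕ) < c s.succ), X j ω) =
      ∑ π ∈ Finset.univ.filter
          (fun π : Finpartition (Finset.univ : Finset (Fin N)) =>
            ∀ σ : Finpartition (Finset.univ : Finset (Fin N)), π ≤ σ → ρ ≤ σ → σ = ⊤),
        ∏ B ∈ π.parts, jointCumulantOn μ X B := by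
  set F : Fin n → Finset (Fin N) := fun s => univ.filter
    (fun j : Fin N => c s.castSucc ≤ (j : ℕ) ∧ (j : ℕ) < c s.succ)
  have hdisj {u v : Fin n} (huv : u < v) : Disjoint (F u) (F v) := by
    have hcuv := hc.monotone (Fin.succ_le_castSucc_iff.2 huv)
    refine Finset.disjoint_left.2 fun j hju hjv => ?_
    simp only [F, mem_filter, mem_univ, true_and] at hju hjv
    omega
  have hF : ρ.IsEnumeratedBy univ F := by
    refine ⟨fun u _ v _ huv => ?_, hρ⟩
    obtain ⟨j, hj⟩ := ρ.nonempty_of_mem_parts (hρ ▸ mem_image_of_mem F (mem_univ u))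
    by_contra hne
    rcases lt_or_gt_of_ne hne with h | h
    · exact Finset.disjoint_left.1 (hdisj h) hj (huv ▸ hj)
    · exact Finset.disjoint_left.1 (hdisj h) (huv ▸ hj) hj
  have hmoment (P : Finset (Fin n)) :
      ∫ ω, ∏ s ∈ P, ∏ j ∈ F s, X j ω ∂μ = ∫ ω, ∏ j ∈ P.biUnion F, X j ω ∂μ := by
    simp_rw [prod_biUnion fun u _ v _ huv => hF.disjoint (mem_univ u) (mem_univ v) huv]
  have key := hF.cumulantOfMoments_biUnion fun B => ∫ ω, ∏ j ∈ B, X j ω ∂μ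
  simp only [← hmoment, Finpartition.sup_eq_top_iff] at key
  exact key

/-- Leonov–Shiryaev: let `{0,…,N-1}` be divided into `n` consecutive
intervals `ρ_s = {j : c s ≤ j < c (s+1)}` given by strictly monotone boundaries `c`
with `c 0 = 0`, `c n = N`. For bounded random variables `X₀,…,X_{N-1}`, the cumulant of
the products over the intervals equals the sum of `k_π(X₀,…,X_{N-1})` over all set
partitions `π` of `{0,…,N-1}` whose join with the interval partition `ρ` is the
one-block partition (equivalently: every common upper bound of `π` and `ρ` is `⊤`). -/
theorem leonov_shiryaev_cumulants_of_products {Ω : Type*} [MeasurableSpace Ω]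
    (μ : Measure Ω) [IsProbabilityMeasure μ] {N n : ℕ}
    (X : Fin N → Ω → ℝ)
    (hXm : ∀ i, Measurable (X i)) (hXb : ∀ i, ∃ C, ∀ ω, |X i ω| ≤ C)
    (c : Fin (n + 1) → ℕ) (hc : StrictMono c) (hc0 : c 0 = 0) (hcN : c (Fin.last n) = N)
    (ρ : Finpartition (Finset.univ : Finset (Fin N)))
    (hρ : ρ.parts = Finset.image
      (fun s : Fin n => Finset.univ.filter
        (fun j : Fin N => c s.castSucc ≤ (j : ℕ) ∧ (j : ℕ) < c s.succ)) Finset.univ) :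
    jointCumulant μ (fun s : Fin n => fun ω =>
        ∏ j ∈ Finset.univ.filter
          (fun j : Fin N => c s.castSucc ≤ (j : ℕ) ∧ (j : ℕ) < c s.succ), X j ω) =
      ∑ π ∈ Finset.univ.filter
          (fun π : Finpartition (Finset.univ : Finset (Fin N)) =>
            ∀ σ : Finpartition (Finset.univ : Finset (Fin N)), π ≤ σ → ρ ≤ σ → σ = ⊤),
        ∏ B ∈ π.parts, jointCumulantOn μ X B :=
  leonov_shiryaev_cumulants_of_products_general μ X c hc ρ hρ
end
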